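/- arXiv:2107.14111 — 2 statements merged into one kernel-verified Lean document; each statement's English description precedes it below -/
import Mathlib

section
/- Let h ∈ ℕ, let f : {0,…,h+1} → ℝ be a concave increasing function with f(0) = 0, and let w be a probability measure on {0,…,h+1} such that w(0) ≤ w(1) ≤ … ≤ w(h) and w(0) ≤ w(h+1). Then Σ_j w(j) f(j)² ≥ (1/7) f(h+1)². -/
open MeasureTheory ProbabilityTheory Finset

namespace NoCutoff

variable {V : Type*}

/-- Row-stochastic nonnegative matrix. -/
def IsStochastic [Fintype V] (P : V → V → ℝ) : Prop :=
  (∀ x y, 0 ≤ P x y) ∧ ∀ x, ∑ y, P x y = 1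

/-- Irreducibility of a transition matrix. -/
def IsIrreducible [Fintype V] [DecidableEq V] (P : V → V → ℝ) : Prop :=
  ∀ x y : V, ∃ n : ℕ, 0 < ((Matrix.of P) ^ n) x y

def IsStationary [Fintype V] (P : V → V → ℝ) (pi : V → ℝ) : Prop :=
  (∀ x, 0 ≤ pi x) ∧ (∑ x, pi x = 1) ∧ ∀ y, ∑ x, pi x * P x y = pi y

def IsReversible (P : V → V → ℝ) (pi : V → ℝ) : Prop :=
  ∀ x y, pi x * P x y = pi y * P y x

open scoped Classical in
/-- `μ` is the law on path space of the Markov chain with kernel `P` started at `x`. -/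
noncomputable def IsPathMeasure [MeasurableSpace V] (P : V → V → ℝ) (x : V)
    (μ : Measure (ℕ → V)) : Prop :=
  IsProbabilityMeasure μ ∧
  ∀ (n : ℕ) (w : ℕ → V),
    μ {ω | ∀ i ≤ n, ω i = w i} =
      (if w 0 = x then 1 else 0) *
        ∏ i ∈ Finset.range n, ENNReal.ofReal (P (w i) (w (i + 1)))

/-- Hitting time of a set (with the convention `sInf ∅ = 0`). -/
noncomputable def hitTime (A : Set V) (ω : ℕ → V) : ℕ := sInf {t | ω t ∈ A}

/-- First positive hitting time. -/
noncomputable def hitTimePos (A : Set V) (ω : ℕ → V) : ℕ :=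
  sInf {t | 1 ≤ t ∧ ω t ∈ A}

/-- Expected hitting time of `A` under the path measure `μ`. -/
noncomputable def EHit [MeasurableSpace V] (μ : Measure (ℕ → V)) (A : Set V) : ℝ :=
  ∫ ω, (hitTime A ω : ℝ) ∂μ

noncomputable def VarHit [MeasurableSpace V] (μ : Measure (ℕ → V)) (A : Set V) : ℝ :=
  variance (fun ω => (hitTime A ω : ℝ)) μ

noncomputable def EHitPos [MeasurableSpace V] (μ : Measure (ℕ → V)) (A : Set V) : ℝ :=
  ∫ ω, (hitTimePos A ω : ℝ) ∂μ

noncomputable def VarHitPos [MeasurableSpace V] (μ : Measure (ℕ → V)) (A : Set V) : ℝ :=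
  variance (fun ω => (hitTimePos A ω : ℝ)) μ

def IsEigenvalue [Fintype V] (P : V → V → ℝ) (a : ℝ) : Prop :=
  ∃ v : V → ℝ, v ≠ 0 ∧ (Matrix.of P).mulVec v = a • v

/-- Transition matrix of the lazy simple random walk on a graph. -/
noncomputable def lazyWalk [Fintype V] [DecidableEq V] (G : SimpleGraph V)
    [DecidableRel G.Adj] : V → V → ℝ :=
  fun x y =>
    if x = y then 1/2 else if G.Adj x y then 1 / (2 * (G.degree x : ℝ)) else 0

/-- Stationary distribution of the (lazy) simple random walk. -/
noncomputable def walkPi [Fintype V] (G : SimpleGraph V) [DecidableRel G.Adj] : V → ℝ :=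
  fun x => (G.degree x : ℝ) / ∑ z, (G.degree z : ℝ)

/-- All vertices at the same distance from the root have the same degree. -/
def SphericallySymmetric [Fintype V] (G : SimpleGraph V) [DecidableRel G.Adj] (o : V) : Prop :=
  ∀ u v : V, G.dist o u = G.dist o v → G.degree u = G.degree v

/-- `y` is an ancestor of `x` in the tree rooted at `o`. -/
def IsAncestor (G : SimpleGraph V) (o x y : V) : Prop :=
  G.dist o x = G.dist o y + G.dist y x

/-- `G_{x,y}`: vertices separated from `y` by `x`. -/
def sepSet (G : SimpleGraph V) (x y : V) : Set V :=
  {z | z ≠ x ∧ ∀ p : G.Walk z y, x ∈ p.support}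

open scoped Classical in
/-- Number of steps spent in `A` strictly before hitting `y`. -/
noncomputable def timeIn (A : Set V) (y : V) (ω : ℕ → V) : ℕ :=
  ((Finset.range (hitTime {y} ω)).filter (fun t => ω t ∈ A)).card

/-- Commute time: first visit to `x` after the first visit to `y`. -/
noncomputable def commuteTime [DecidableEq V] (x y : V) (ω : ℕ → V) : ℕ :=
  sInf {t | hitTime {y} ω ≤ t ∧ ω t = x}

/-- Total-variation mixing time (threshold 1/4). -/
noncomputable def tmix [Fintype V] [DecidableEq V] (P : V → V → ℝ) (pi : V → ℝ) : ℕ :=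
  sInf {t | ∀ x : V, (∑ y, |((Matrix.of P) ^ t) x y - pi y|) / 2 ≤ 1/4}

noncomputable def dirichletForm [Fintype V] (P : V → V → ℝ) (pi : V → ℝ) (f : V → ℝ) : ℝ :=
  (1/2) * ∑ x, ∑ y, (f x - f y)^2 * pi x * P x y

noncomputable def meanPi [Fintype V] (pi f : V → ℝ) : ℝ := ∑ x, pi x * f x

noncomputable def varPi [Fintype V] (pi f : V → ℝ) : ℝ :=
  ∑ x, pi x * (f x - meanPi pi f)^2

/-- Mass of a set under a distribution. -/
noncomputable def piMass [Fintype V] (pi : V → ℝ) (A : Set V) : ℝ :=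
  ∑ z, A.indicator pi z



private lemma sum_sq_range' (n : ℕ) :
    ∑ j ∈ Finset.range n, (j : ℝ)^2 = n*(n-1)*(2*n-1)/6 := by
  induction n with
  | zero => simp
  | succ n ih =>
    rw [Finset.sum_range_succ, ih]
    push_cast
    ring

set_option maxHeartbeats 1600000 in
private lemma stmt1_core (h : ℕ) (f w : ℕ → ℝ)
    (hconc : ∀ j, j + 1 ≤ h → f (j + 2) - f (j + 1) ≤ f (j + 1) - f j)
    (hmono : ∀ j ≤ h, f j ≤ f (j + 1))
    (hf0 : f 0 = 0)
    (hw : ∀ j, 0 ≤ w j)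
    (hwsum : ∑ j ∈ Finset.range (h + 2), w j = 1)
    (hwmono : ∀ j, j < h → w j ≤ w (j + 1))
    (hw0 : w 0 ≤ w (h + 1)) :
    (1 / 7 : ℝ) * f (h + 1) ^ 2 ≤ ∑ j ∈ Finset.range (h + 2), w j * f j ^ 2 := by
  have hfmono : ∀ i j, i ≤ j → j ≤ h + 1 → f i ≤ f j := by
    intro i j hij hj
    induction j with
    | zero =>
      have : i = 0 := Nat.le_zero.mp hij
      subst this; exact le_refl _
    | succ j ih =>
      rcases Nat.eq_or_lt_of_le hij with rfl | hlt
      · exact le_refl _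
      · exact le_trans (ih (by omega) (by omega)) (hmono j (by omega))
  have hfnn : ∀ j, j ≤ h + 1 → 0 ≤ f j := by
    intro j hj
    simpa [hf0] using hfmono 0 j (Nat.zero_le _) hj
  rcases Nat.lt_or_ge h 2 with hsmall | hbig
  · -- small cases h = 0, 1
    interval_cases h
    · rw [Finset.sum_range_succ, Finset.sum_range_succ, Finset.sum_range_zero]
        at hwsum ⊢
      have hw01 : w 0 ≤ w 1 := hw0
      have t1 : (0:ℝ) ≤ (w 1 - 1/7) * f 1 ^ 2 :=
        mul_nonneg (by linarith) (sq_nonneg _)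
      rw [hf0]
      norm_num at t1 ⊢
      linarith
    · rw [Finset.sum_range_succ, Finset.sum_range_succ, Finset.sum_range_succ,
        Finset.sum_range_zero] at hwsum ⊢
      have hc := hconc 0 (by omega)
      have h1 : 0 ≤ f 1 := hfnn 1 (by omega)
      have h2 : 0 ≤ f 2 := hfnn 2 (by omega)
      have h3 : f 2 ≤ 2 * f 1 := by
        rw [hf0] at hc; norm_num at hc; linarith
      have h4 : f 2 ^ 2 ≤ 4 * f 1 ^ 2 := by nlinarith
      have hw02 : w 0 ≤ w 2 := hw0
      have h5 : (1:ℝ) ≤ w 1 + 2 * w 2 := by linarith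
      have t1 : (0:ℝ) ≤ w 1 * (4 * f 1 ^ 2 - f 2 ^ 2) :=
        mul_nonneg (hw 1) (by linarith)
      have t2 : (0:ℝ) ≤ (w 1 + 2 * w 2 - 1) * f 2 ^ 2 :=
        mul_nonneg (by linarith) (sq_nonneg _)
      have t3 : (0:ℝ) ≤ w 2 * f 2 ^ 2 := mul_nonneg (hw 2) (sq_nonneg _)
      rw [hf0]
      norm_num at t1 t2 t3 ⊢
      nlinarith [sq_nonneg (f 2)]
  · -- main case: n = h + 1 ≥ 3
    have hwm : ∀ i j, i ≤ j → j ≤ h → w i ≤ w j := by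
      intro i j hij hj
      induction j with
      | zero =>
        have : i = 0 := Nat.le_zero.mp hij
        subst this; exact le_refl _
      | succ j ih =>
        rcases Nat.eq_or_lt_of_le hij with rfl | hlt
        · exact le_refl _
        · exact le_trans (ih (by omega) (by omega)) (hwmono j (by omega))
    have hd : ∀ i j, i ≤ j → j ≤ h → f (j+1) - f j ≤ f (i+1) - f i := by
      intro i j hij hj
      induction j with
      | zero =>
        have : i = 0 := Nat.le_zero.mp hij
        subst this; exact le_refl _
      | succ j ih =>
        rcases Nat.eq_or_lt_of_le hij with rfl | hlt
        · exact le_refl _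
        · exact le_trans (hconc j hj) (ih (by omega) (by omega))
    set n := h + 1 with hn
    have hkey : ∀ j, j ≤ n → (j : ℝ) * f n ≤ (n : ℝ) * f j := by
      intro j hj
      rcases Nat.eq_or_lt_of_le hj with rfl | hlt
      · exact le_refl _
      · have hjh : j ≤ h := by omega
        set c := f (j+1) - f j with hc
        have htel : ∑ i ∈ Finset.range j, (f (i+1) - f i) = f j := by
          rw [Finset.sum_range_sub, hf0, sub_zero]
        have hS1 : (j : ℝ) * c ≤ f j := by
          rw [← htel]
          calc (j : ℝ) * c = ∑ _i ∈ Finset.range j, c := by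
                rw [Finset.sum_const, nsmul_eq_mul, Finset.card_range]
            _ ≤ ∑ i ∈ Finset.range j, (f (i+1) - f i) := by
                apply Finset.sum_le_sum
                intro i hi
                exact hd i j (le_of_lt (Finset.mem_range.mp hi)) hjh
        have htel2 : ∑ i ∈ Finset.Ico j n, (f (i+1) - f i) = f n - f j := by
          rw [Finset.sum_Ico_eq_sub _ (le_of_lt hlt), Finset.sum_range_sub,
            Finset.sum_range_sub, hf0]
          ring
        have hS2 : f n - f j ≤ ((n - j : ℕ) : ℝ) * c := by
          rw [← htel2]
          calc ∑ i ∈ Finset.Ico j n, (f (i+1) - f i)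
              ≤ ∑ _i ∈ Finset.Ico j n, c := by
                apply Finset.sum_le_sum
                intro i hi
                have hi' := Finset.mem_Ico.mp hi
                exact hd j i hi'.1 (by omega)
            _ = ((n - j : ℕ) : ℝ) * c := by
                rw [Finset.sum_const, nsmul_eq_mul, Nat.card_Ico]
        have hcast : ((n - j : ℕ) : ℝ) = (n : ℝ) - (j : ℝ) := by
          push_cast [Nat.cast_sub (le_of_lt hlt)]; ring
        rw [hcast] at hS2
        have hjnn : (0:ℝ) ≤ (j:ℝ) := Nat.cast_nonneg j
        have hba : (0:ℝ) ≤ (n:ℝ) - (j:ℝ) := by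
          have : (j:ℝ) ≤ (n:ℝ) := Nat.cast_le.mpr hj
          linarith
        nlinarith [mul_nonneg hba (sub_nonneg.mpr hS1),
          mul_le_mul_of_nonneg_left hS2 hjnn]
    have hsplit : ∑ j ∈ Finset.range (h + 2), w j * f j ^ 2
        = (∑ j ∈ Finset.range n, w j * f j ^ 2) + w n * f n ^ 2 := by
      rw [show h + 2 = n + 1 from rfl, Finset.sum_range_succ]
    have hwsplit : (∑ j ∈ Finset.range n, w j) + w n = 1 := by
      rw [← Finset.sum_range_succ]; exact hwsum
    set A := ∑ j ∈ Finset.range n, w j with hA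
    set Swf := ∑ j ∈ Finset.range n, w j * f j ^ 2 with hSwf
    set Sf := ∑ j ∈ Finset.range n, f j ^ 2 with hSf
    have hAnn : 0 ≤ A := Finset.sum_nonneg fun i _ => hw i
    have hwn : 0 ≤ w n := hw n
    have hwn1 : w n ≤ 1 := by linarith
    have hfn2 : (0:ℝ) ≤ f n ^ 2 := sq_nonneg _
    have hmv : MonovaryOn w (fun j => f j ^ 2) (Finset.range n : Finset ℕ) := by
      intro i hi j hj hlt
      simp only [Finset.coe_range, Set.mem_Iio] at hi hj
      rcases le_or_gt i j with hij | hij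
      · exact hwm i j hij (by omega)
      · exfalso
        have h1 : f j ≤ f i := hfmono j i (le_of_lt hij) (by omega)
        have h2 : 0 ≤ f j := hfnn j (by omega)
        have : f j ^ 2 ≤ f i ^ 2 := by nlinarith
        simp only at hlt
        linarith
    have cheb : A * Sf ≤ (n : ℝ) * Swf := by
      have := hmv.sum_mul_sum_le_card_mul_sum
      simpa [Finset.card_range] using this
    have hlow : f n ^ 2 * ((n:ℝ)*((n:ℝ)-1)*(2*(n:ℝ)-1)/6) ≤ (n:ℝ)^2 * Sf := by
      have hterm : ∀ j ∈ Finset.range n, (j:ℝ)^2 * f n ^ 2 ≤ (n:ℝ)^2 * f j ^ 2 := by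
        intro j hj
        have hj' : j ≤ n := le_of_lt (Finset.mem_range.mp hj)
        have hk := hkey j hj'
        have h1 : (0:ℝ) ≤ (j:ℝ) * f n :=
          mul_nonneg (Nat.cast_nonneg j) (hfnn n (le_refl _))
        nlinarith
      calc f n ^ 2 * ((n:ℝ)*((n:ℝ)-1)*(2*(n:ℝ)-1)/6)
          = ∑ j ∈ Finset.range n, (j:ℝ)^2 * f n ^ 2 := by
            rw [← Finset.sum_mul, sum_sq_range' n]; ring
        _ ≤ ∑ j ∈ Finset.range n, (n:ℝ)^2 * f j ^ 2 := Finset.sum_le_sum hterm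
        _ = (n:ℝ)^2 * Sf := by rw [← Finset.mul_sum]
    have hn3 : (3:ℝ) ≤ (n:ℝ) := by
      have : 3 ≤ n := by omega
      exact_mod_cast this
    clear_value n A Swf Sf
    set K := (n:ℝ)*((n:ℝ)-1)*(2*(n:ℝ)-1)/6 with hK
    clear_value K
    have hnn : (0:ℝ) ≤ (n:ℝ) := by linarith
    have hK1 : (n:ℝ)^3 ≤ 7 * K := by
      have e1 : (0:ℝ) ≤ (n:ℝ) * (((n:ℝ)-3)*(8*(n:ℝ)+3)+16) :=
        mul_nonneg hnn (by nlinarith)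
      rw [hK]; linarith [e1, sq_nonneg ((n:ℝ))]
    have hK2 : K ≤ (n:ℝ)^3 := by
      have e2 : (0:ℝ) ≤ (n:ℝ) * (4*(n:ℝ)^2 + 3*(n:ℝ) - 1) :=
        mul_nonneg hnn (by nlinarith)
      rw [hK]; linarith [e2]
    have c1 : A * (f n ^ 2 * K) ≤ A * ((n:ℝ)^2 * Sf) :=
      mul_le_mul_of_nonneg_left hlow hAnn
    have c2 : (n:ℝ)^2 * (A * Sf) ≤ (n:ℝ)^2 * ((n:ℝ) * Swf) :=
      mul_le_mul_of_nonneg_left cheb (by positivity)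
    have hmain : A * (f n ^ 2 * K) ≤ (n:ℝ)^3 * Swf := by
      calc A * (f n ^ 2 * K) ≤ A * ((n:ℝ)^2 * Sf) := c1
        _ = (n:ℝ)^2 * (A * Sf) := by ring
        _ ≤ (n:ℝ)^2 * ((n:ℝ) * Swf) := c2
        _ = (n:ℝ)^3 * Swf := by ring
    have hA1 : A = 1 - w n := by linarith
    rw [hA1] at hmain
    have hnpos : (0:ℝ) < (n:ℝ)^3 := by positivity
    rw [hsplit]
    have hfinal : (1/7 : ℝ) * f n ^ 2 * (n:ℝ)^3 ≤ (Swf + w n * f n ^ 2) * (n:ℝ)^3 := by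
      nlinarith [hmain,
        mul_nonneg (mul_nonneg hwn hfn2) (sub_nonneg.mpr hK2),
        mul_nonneg (mul_nonneg (sub_nonneg.mpr hwn1) hfn2) (sub_nonneg.mpr hK1),
        mul_nonneg (mul_nonneg hwn hfn2) (le_of_lt hnpos)]
    exact le_of_mul_le_mul_right hfinal hnpos

/-- Lemma: for a concave increasing `f` with `f 0 = 0` and a suitably monotone weight `w`,
`E_w(f²) ≥ f(h+1)²/7`. -/
theorem stmt1 (h : ℕ) (f w : ℕ → ℝ)
    (hconc : ∀ j, j + 1 ≤ h → f (j + 2) - f (j + 1) ≤ f (j + 1) - f j)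
    (hmono : ∀ j ≤ h, f j ≤ f (j + 1))
    (hf0 : f 0 = 0)
    (hw : ∀ j, 0 ≤ w j)
    (hwsum : ∑ j ∈ Finset.range (h + 2), w j = 1)
    (hwmono : ∀ j, j < h → w j ≤ w (j + 1))
    (hw0 : w 0 ≤ w (h + 1)) :
    (1 / 7 : ℝ) * f (h + 1) ^ 2 ≤ ∑ j ∈ Finset.range (h + 2), w j * f j ^ 2 :=
  stmt1_core h f w hconc hmono hf0 hw hwsum hwmono hw0

end NoCutoff
end

section
/- Let T be a finite spherically symmetric tree rooted at o with deg₀ = 1, and let v₀ = o, v₁, …, v_ℓ be the initial segment of T up to the closest branching point (or the whole tree if it is a segment). Define g : V → ℝ by g(v_i) = i for i ≤ ℓ and g(x) = ℓ otherwise. Then the Dirichlet form satisfies E(g) = ℓ/(4|E|) and Var_π(g) ≥ ℓ³/(12|E|); consequently t_rel ≥ ℓ²/3. -/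
open MeasureTheory ProbabilityTheory Finset

namespace NoCutoff

variable {V : Type*}

lemma aux_sum_id (n : ℕ) : ∑ i ∈ Finset.range (n+1), (i:ℝ) = n*(n+1)/2 := by
  induction n with
  | zero => simp
  | succ n ih => rw [Finset.sum_range_succ, ih]; push_cast; ring

lemma aux_sum_sq (n : ℕ) : ∑ i ∈ Finset.range (n+1), (i:ℝ)^2 = n*(n+1)*(2*n+1)/6 := by
  induction n with
  | zero => simp
  | succ n ih => rw [Finset.sum_range_succ, ih]; push_cast; ring

section G
variable [Fintype V] [DecidableEq V] (G : SimpleGraph V) [DecidableRel G.Adj]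

lemma aux_deg_pos [Nontrivial V] (hc : G.Connected) (x : V) : 0 < G.degree x := by
  rw [G.degree_pos_iff_exists_adj]
  obtain ⟨z, hz⟩ := exists_ne x
  obtain ⟨w⟩ := hc.preconnected x z
  cases w with
  | nil => exact absurd rfl (Ne.symm hz)
  | cons h _ => exact ⟨_, h⟩

variable {G}

lemma aux_lazy_nonneg (x y : V) : 0 ≤ lazyWalk G x y := by
  unfold lazyWalk
  split_ifs <;> positivity

lemma aux_lazy_rowsum (hdeg : ∀ x, 0 < G.degree x) (x : V) :
    ∑ y, lazyWalk G x y = 1 := by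
  have hx := hdeg x
  have hsplit : ∀ y, lazyWalk G x y =
      (if y = x then (1/2 : ℝ) else 0) + (if G.Adj x y then 1 / (2 * (G.degree x : ℝ)) else 0) := by
    intro y
    unfold lazyWalk
    by_cases h : x = y
    · subst h; simp [G.irrefl]
    · simp [h, Ne.symm h]
  rw [Finset.sum_congr rfl fun y _ => hsplit y, Finset.sum_add_distrib]
  rw [Finset.sum_ite_eq' Finset.univ x (fun _ => (1/2:ℝ))]
  have hstep : ∑ y, (if G.Adj x y then 1 / (2 * (G.degree x : ℝ)) else 0)
      = (G.degree x : ℝ) * (1 / (2 * (G.degree x : ℝ))) := by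
    rw [← Finset.sum_filter, ← SimpleGraph.neighborFinset_eq_filter, Finset.sum_const,
      nsmul_eq_mul, SimpleGraph.card_neighborFinset_eq_degree]
  rw [hstep]
  have hx' : (G.degree x : ℝ) ≠ 0 := by positivity
  field_simp
  rw [if_pos (Finset.mem_univ x)]; ring

lemma aux_D_pos [Nontrivial V] (hc : G.Connected) : (0:ℝ) < ∑ z, (G.degree z : ℝ) :=
  Finset.sum_pos (fun z _ => Nat.cast_pos.mpr (aux_deg_pos G hc z)) Finset.univ_nonempty

lemma aux_walkPi_pos [Nontrivial V] (hc : G.Connected) (x : V) : 0 < walkPi G x :=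
  div_pos (Nat.cast_pos.mpr (aux_deg_pos G hc x)) (aux_D_pos hc)

lemma aux_edge_term (hc : G.Connected) [Nontrivial V] {x y : V} (h : G.Adj x y) :
    walkPi G x * lazyWalk G x y = 1 / (2 * ∑ z, (G.degree z : ℝ)) := by
  have hdx : (0:ℝ) < (G.degree x : ℝ) := Nat.cast_pos.mpr (aux_deg_pos G hc x)
  have hD : (0:ℝ) < ∑ z, (G.degree z : ℝ) := aux_D_pos hc
  unfold walkPi lazyWalk
  rw [if_neg h.ne, if_pos h]
  field_simp

lemma aux_reversible (hc : G.Connected) [Nontrivial V] (x y : V) :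
    walkPi G x * lazyWalk G x y = walkPi G y * lazyWalk G y x := by
  by_cases hxy : x = y
  · subst hxy; rfl
  by_cases h : G.Adj x y
  · rw [aux_edge_term hc h, aux_edge_term hc h.symm]
  · have h' : ¬ G.Adj y x := fun hyx => h hyx.symm
    unfold lazyWalk
    rw [if_neg hxy, if_neg h, if_neg (Ne.symm hxy), if_neg h']
    ring

lemma aux_stationary (hc : G.Connected) [Nontrivial V] (y : V) :
    ∑ x, walkPi G x * lazyWalk G x y = walkPi G y := by
  have : ∀ x, walkPi G x * lazyWalk G x y = walkPi G y * lazyWalk G y x :=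
    fun x => aux_reversible hc x y
  rw [Finset.sum_congr rfl fun x _ => this x, ← Finset.mul_sum,
    aux_lazy_rowsum (aux_deg_pos G hc), mul_one]

lemma aux_eig_abs_le_one [Nonempty V] (P : V → V → ℝ) (h0 : ∀ x y, 0 ≤ P x y)
    (h1 : ∀ x, ∑ y, P x y = 1) (a : ℝ) (ha : IsEigenvalue P a) : |a| ≤ 1 := by
  obtain ⟨w, hw0, hww⟩ := ha
  obtain ⟨x₀, -, hx₀⟩ := Finset.exists_max_image Finset.univ (fun x => |w x|) ⟨Classical.arbitrary V, Finset.mem_univ _⟩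
  have hmax : ∀ y, |w y| ≤ |w x₀| := fun y => hx₀ y (Finset.mem_univ y)
  have hpos : 0 < |w x₀| := by
    by_contra hle
    push_neg at hle
    apply hw0
    funext z
    have := (hmax z).trans hle
    have := abs_nonneg (w z)
    simp only [Pi.zero_apply]
    nlinarith [abs_nonneg (w z), neg_abs_le (w z), le_abs_self (w z)]
  have heq : ∑ y, P x₀ y * w y = a * w x₀ := by
    have := congrFun hww x₀
    simpa [Matrix.mulVec, dotProduct] using this
  have : |a| * |w x₀| ≤ |w x₀| := by
    calc |a| * |w x₀| = |∑ y, P x₀ y * w y| := by rw [heq, abs_mul]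
    _ ≤ ∑ y, |P x₀ y * w y| := Finset.abs_sum_le_sum_abs _ _
    _ ≤ ∑ y, P x₀ y * |w x₀| := by
        apply Finset.sum_le_sum
        intro y _
        rw [abs_mul, abs_of_nonneg (h0 x₀ y)]
        exact mul_le_mul_of_nonneg_left (hmax y) (h0 x₀ y)
    _ = |w x₀| := by rw [← Finset.sum_mul, h1 x₀, one_mul]
  exact le_of_mul_le_mul_right (by linarith) hpos

lemma aux_max_principle (hc : G.Connected) [Nontrivial V] (w : V → ℝ)
    (hw : (Matrix.of (lazyWalk G)).mulVec w = w) (x y : V) : w x = w y := by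
  have hdeg := aux_deg_pos G hc
  obtain ⟨x₀, -, hx₀⟩ := Finset.exists_max_image Finset.univ w ⟨x, Finset.mem_univ _⟩
  have hmax : ∀ z, w z ≤ w x₀ := fun z => hx₀ z (Finset.mem_univ z)
  have step : ∀ a b, G.Adj a b → w a = w x₀ → w b = w x₀ := by
    intro a b hab hwa
    have heq : ∑ z, lazyWalk G a z * w z = w a := by
      have := congrFun hw a
      simpa [Matrix.mulVec, dotProduct] using this
    have hzero : ∑ z, lazyWalk G a z * (w a - w z) = 0 := by
      have : ∑ z, lazyWalk G a z * (w a - w z)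
          = (∑ z, lazyWalk G a z) * w a - ∑ z, lazyWalk G a z * w z := by
        rw [Finset.sum_mul, ← Finset.sum_sub_distrib]
        exact Finset.sum_congr rfl fun z _ => by ring
      rw [this, aux_lazy_rowsum hdeg, one_mul, heq, sub_self]
    have hterm : ∀ z ∈ Finset.univ, (0:ℝ) ≤ lazyWalk G a z * (w a - w z) := by
      intro z _
      apply mul_nonneg (aux_lazy_nonneg a z)
      rw [hwa]
      linarith [hmax z]
    have := (Finset.sum_eq_zero_iff_of_nonneg hterm).mp hzero b (Finset.mem_univ b)
    have hP : 0 < lazyWalk G a b := by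
      unfold lazyWalk
      rw [if_neg hab.ne, if_pos hab]
      have : (0:ℝ) < (G.degree a : ℝ) := by exact_mod_cast hdeg a
      positivity
    have : w a - w b = 0 := by
      by_contra hne
      exact hne (by nlinarith)
    linarith [hwa ▸ this]
  have key : ∀ (u z' : V) (p : G.Walk u z'), w u = w x₀ → w z' = w x₀ := by
    intro u z' p
    induction p with
    | nil => exact id
    | cons h _ ih => exact fun hu => ih (step _ _ h hu)
  have hall : ∀ z, w z = w x₀ := fun z => key x₀ z (hc.preconnected x₀ z).some rfl
  rw [hall x, hall y]

end G

lemma pilp_sum_apply [Fintype V] {ι : Type*} (s : Finset ι) (b : ι → EuclideanSpace ℝ V) (x : V) :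
    (∑ i ∈ s, b i) x = ∑ i ∈ s, b i x :=
  map_sum (EuclideanSpace.projₗ (𝕜 := ℝ) x) b s

lemma aux_spectral [Fintype V] [DecidableEq V] (A : Matrix V V ℝ)
    (hsym : ∀ x y, A x y = A y x) (lam2 : ℝ)
    (hmax : ∀ r : ℝ, (∃ u : V → ℝ, u ≠ 0 ∧ A.mulVec u = r • u) → r ≠ 1 → r ≤ lam2)
    (f : V → ℝ)
    (horth : ∀ u : V → ℝ, A.mulVec u = u → ∑ x, u x * f x = 0) :
    ∑ x, f x * (A.mulVec f) x ≤ lam2 * ∑ x, f x * f x := by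
  have hA : A.IsHermitian := by
    ext x y
    simp only [Matrix.conjTranspose_apply, RCLike.star_def, conj_trivial]
    exact hsym y x
  set b := hA.eigenvectorBasis with hb
  set μ := hA.eigenvalues with hμ
  have hinner : ∀ (p q : EuclideanSpace ℝ V), inner (𝕜 := ℝ) p q = ∑ x, p x * q x := by
    intro p q
    simp [PiLp.inner_apply, RCLike.inner_apply, conj_trivial]
    exact Finset.sum_congr rfl fun x _ => mul_comm _ _
  have horm : ∀ i j, ∑ x, b i x * b j x = if i = j then (1:ℝ) else 0 := by
    intro i j
    rw [← hinner (b i) (b j)]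
    exact orthonormal_iff_ite.mp b.orthonormal i j
  have heigen : ∀ i, A.mulVec (b i) = fun x => μ i * b i x := by
    intro i
    funext x
    exact congrFun (hA.mulVec_eigenvectorBasis i) x
  have hunz : ∀ i, (fun x => b i x) ≠ (0 : V → ℝ) := by
    intro i hz
    apply b.orthonormal.ne_zero i
    ext x
    exact congrFun hz x
  -- coefficients
  set c : V → ℝ := fun i => ∑ x, b i x * f x with hcdef
  have hrepr : ∀ x, f x = ∑ i, c i * b i x := by
    intro x
    have hsr := b.sum_repr (WithLp.toLp 2 f : EuclideanSpace ℝ V)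
    have happ : (∑ i, b.repr (WithLp.toLp 2 f : EuclideanSpace ℝ V) i • b i) x = f x :=
      congrArg (fun p => p x) hsr
    rw [pilp_sum_apply] at happ
    rw [← happ]
    apply Finset.sum_congr rfl
    intro i _
    rw [PiLp.smul_apply, smul_eq_mul, b.repr_apply_apply, hinner]
  -- key sums
  have hAfx : ∀ y, (A.mulVec f) y = ∑ i, c i * (μ i * b i y) := by
    intro y
    calc (A.mulVec f) y = ∑ z, A y z * f z := rfl
    _ = ∑ z, ∑ i, A y z * (c i * b i z) := by
        apply Finset.sum_congr rfl
        intro z _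
        rw [hrepr z, Finset.mul_sum]
    _ = ∑ i, ∑ z, A y z * (c i * b i z) := Finset.sum_comm
    _ = ∑ i, c i * (μ i * b i y) := by
        apply Finset.sum_congr rfl
        intro i _
        have h1 : ∑ z, A y z * (c i * b i z) = c i * ∑ z, A y z * b i z := by
          rw [Finset.mul_sum]; exact Finset.sum_congr rfl fun z _ => by ring
        have h2 : ∑ z, A y z * b i z = (A.mulVec (b i)) y := rfl
        rw [h1, h2, heigen i]
  have key : ∀ d : V → ℝ, ∑ x, f x * (∑ i, d i * b i x) = ∑ i, d i * c i := by
    intro d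
    calc ∑ x, f x * (∑ i, d i * b i x) = ∑ x, ∑ i, f x * (d i * b i x) := by
          apply Finset.sum_congr rfl
          intro x _
          rw [Finset.mul_sum]
    _ = ∑ i, ∑ x, f x * (d i * b i x) := Finset.sum_comm
    _ = ∑ i, d i * c i := by
          apply Finset.sum_congr rfl
          intro i _
          have : ∑ x, f x * (d i * b i x) = d i * ∑ x, b i x * f x := by
            rw [Finset.mul_sum]; exact Finset.sum_congr rfl fun x _ => by ring
          rw [this]
  have hQ : ∑ x, f x * (A.mulVec f) x = ∑ i, (c i * μ i) * c i := by
    have : ∑ x, f x * (A.mulVec f) x = ∑ x, f x * (∑ i, (c i * μ i) * b i x) := by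
      apply Finset.sum_congr rfl
      intro x _
      rw [hAfx x]
      congr 1
      exact Finset.sum_congr rfl fun i _ => by ring
    rw [this, key]
  have hN : ∑ x, f x * f x = ∑ i, c i * c i := by
    have : ∑ x, f x * f x = ∑ x, f x * (∑ i, c i * b i x) := by
      apply Finset.sum_congr rfl
      intro x _
      rw [← hrepr x]
    rw [this, key]
  rw [hQ, hN, Finset.mul_sum]
  apply Finset.sum_le_sum
  intro i _
  by_cases h1 : μ i = 1
  · have hz : c i = 0 := by
      have : A.mulVec (fun x => b i x) = fun x => b i x := by
        rw [heigen i]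
        funext x
        rw [h1, one_mul]
      exact horth _ this
    rw [hz]
    simp
  · have := hmax (μ i) ⟨fun x => b i x, hunz i, by
      rw [heigen i]; funext x; rw [Pi.smul_apply, smul_eq_mul]⟩ h1
    nlinarith [mul_self_nonneg (c i)]


section Main

open SimpleGraph

set_option maxHeartbeats 2000000 in
/-- On a spherically symmetric tree with `deg₀ = 1` and initial segment `v₀,…,v_ℓ`, the test
function `g` has `E(g) = ℓ/(4|E|)`, `Var_π(g) ≥ ℓ³/(12|E|)`, and consequently `t_rel ≥ ℓ²/3`. -/
theorem stmt16 [Fintype V] [DecidableEq V]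
    (G : SimpleGraph V) [DecidableRel G.Adj] (hG : G.IsTree) (o : V)
    (hss : SphericallySymmetric G o) (hdego : G.degree o = 1)
    (l : ℕ) (hl : 0 < l) (v : ℕ → V) (hv0 : v 0 = o)
    (hpath : ∀ i, i < l → G.Adj (v i) (v (i + 1)))
    (hdist : ∀ i, i ≤ l → G.dist o (v i) = i)
    (hnob : ∀ i, i < l → G.degree (v i) ≤ 2)
    (hbranch : 3 ≤ G.degree (v l) ∨ ((∀ z : V, G.degree z ≤ 2) ∧ ∀ z : V, G.dist o z ≤ l))
    (g : V → ℝ) (hg1 : ∀ i, i ≤ l → g (v i) = i)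
    (hg2 : ∀ x : V, (∀ i, i ≤ l → x ≠ v i) → g x = l) :
    dirichletForm (lazyWalk G) (walkPi G) g = (l : ℝ) / (4 * G.edgeFinset.card) ∧
    (l : ℝ) ^ 3 / (12 * G.edgeFinset.card) ≤ varPi (walkPi G) g ∧
    ∀ lam2 : ℝ, IsEigenvalue (lazyWalk G) lam2 → lam2 ≠ 1 →
      (∀ a : ℝ, IsEigenvalue (lazyWalk G) a → a ≠ 1 → a ≤ lam2) →
      (l : ℝ) ^ 2 / 3 ≤ 1 / (1 - lam2) := by
  classical
  have hconn : G.Connected := hG.isConnected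
  have hd0 : G.dist o (v 0) = 0 := hdist 0 (Nat.zero_le l)
  have hd1 : G.dist o (v 1) = 1 := hdist 1 hl
  have hne01 : v 0 ≠ v 1 := fun h => by rw [h, hd1] at hd0; omega
  haveI : Nontrivial V := ⟨v 0, v 1, hne01⟩
  have hdeg : ∀ x, 0 < G.degree x := aux_deg_pos G hconn
  have hDpos : (0:ℝ) < ∑ z, (G.degree z : ℝ) := aux_D_pos hconn
  set D : ℝ := ∑ z, (G.degree z : ℝ) with hDdef
  have hD2E : D = 2 * (G.edgeFinset.card : ℝ) := by
    rw [hDdef]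
    rw [← Nat.cast_sum]
    exact_mod_cast congrArg (Nat.cast : ℕ → ℝ) G.sum_degrees_eq_twice_card_edges
  have hEpos : (0:ℝ) < (G.edgeFinset.card : ℝ) := by
    nlinarith
  have hvinj : ∀ i j, i ≤ l → j ≤ l → v i = v j → i = j := by
    intro i j hi hj hij
    have h1 := hdist i hi
    have h2 := hdist j hj
    rw [hij] at h1
    omega
  set pi := walkPi G with hpidef
  set P := lazyWalk G with hPdef
  have hpipos : ∀ x, 0 < pi x := aux_walkPi_pos hconn
  -- the path-edge condition
  set cond : V → V → Prop := fun x y =>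
    ∃ i, i < l ∧ ((x = v i ∧ y = v (i+1)) ∨ (x = v (i+1) ∧ y = v i)) with hconddef
  -- distances of adjacent vertices differ by at most one
  have hadjdist : ∀ x y, G.Adj x y → G.dist o x ≤ G.dist o y + 1 := by
    intro x y h
    have h1 : G.dist y x ≤ 1 := by
      have := G.dist_le h.symm.toWalk
      simpa using this
    calc G.dist o x ≤ G.dist o y + G.dist y x := hconn.dist_triangle
    _ ≤ G.dist o y + 1 := by omega
  -- a vertex not on the path adjacent to v i with i < l is impossible
  have hnoext : ∀ i, i < l → ∀ y, G.Adj (v i) y → (∀ j, j ≤ l → y ≠ v j) → False := by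
    intro i hi y hadj hyoff
    match i with
    | 0 =>
      have hmem1 : v 1 ∈ G.neighborFinset (v 0) := by
        rw [SimpleGraph.mem_neighborFinset]; exact hpath 0 hl
      have hmem2 : y ∈ G.neighborFinset (v 0) := by
        rw [SimpleGraph.mem_neighborFinset]; exact hadj
      have hne : y ≠ v 1 := hyoff 1 hl
      have h2 : 2 ≤ G.degree (v 0) := by
        rw [← SimpleGraph.card_neighborFinset_eq_degree]
        have : ({y, v 1} : Finset V) ⊆ G.neighborFinset (v 0) := by
          intro z hz
          rcases Finset.mem_insert.mp hz with h | h
          · subst h; exact hmem2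
          · rw [Finset.mem_singleton] at h; subst h; exact hmem1
        calc 2 = ({y, v 1} : Finset V).card := by
              rw [Finset.card_insert_of_notMem (by simpa using hne), Finset.card_singleton]
        _ ≤ _ := Finset.card_le_card this
      rw [hv0, hdego] at h2
      omega
    | (k+1) =>
      have hk2 : k + 2 ≤ l := hi
      have hmem1 : v k ∈ G.neighborFinset (v (k+1)) := by
        rw [SimpleGraph.mem_neighborFinset]; exact (hpath k (by omega)).symm
      have hmem2 : v (k+2) ∈ G.neighborFinset (v (k+1)) := by
        rw [SimpleGraph.mem_neighborFinset]; exact hpath (k+1) hi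
      have hmem3 : y ∈ G.neighborFinset (v (k+1)) := by
        rw [SimpleGraph.mem_neighborFinset]; exact hadj
      have hne12 : v k ≠ v (k+2) := fun h => by
        have := hvinj k (k+2) (by omega) (by omega) h; omega
      have hne3a : y ≠ v k := hyoff k (by omega)
      have hne3b : y ≠ v (k+2) := hyoff (k+2) (by omega)
      have h3 : 3 ≤ G.degree (v (k+1)) := by
        rw [← SimpleGraph.card_neighborFinset_eq_degree]
        have hsub : ({y, v k, v (k+2)} : Finset V) ⊆ G.neighborFinset (v (k+1)) := by
          intro z hz
          simp only [Finset.mem_insert, Finset.mem_singleton] at hz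
          rcases hz with h | h | h <;> subst h
          exacts [hmem3, hmem1, hmem2]
        calc 3 = ({y, v k, v (k+2)} : Finset V).card := by
              rw [Finset.card_insert_of_notMem (by simp [hne3a, hne3b]),
                Finset.card_insert_of_notMem (by simpa using hne12), Finset.card_singleton]
        _ ≤ _ := Finset.card_le_card hsub
      have := hnob (k+1) hi
      omega
  -- adjacent vertices not forming a path edge have equal g values
  have claimA : ∀ x y, G.Adj x y → ¬ cond x y → g x = g y := by
    intro x y hadj hnc
    by_cases hx : ∃ i, i ≤ l ∧ x = v i
    · obtain ⟨i, hi, hxe⟩ := hx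
      by_cases hy : ∃ j, j ≤ l ∧ y = v j
      · obtain ⟨j, hj, hye⟩ := hy
        exfalso
        have hij : i ≠ j := fun h => hadj.ne (by rw [hxe, hye, h])
        have h1 : i ≤ j + 1 := by
          have := hadjdist x y hadj
          rw [hxe, hye, hdist i hi, hdist j hj] at this; omega
        have h2 : j ≤ i + 1 := by
          have := hadjdist y x hadj.symm
          rw [hxe, hye, hdist i hi, hdist j hj] at this; omega
        apply hnc
        rcases (by omega : j = i + 1 ∨ i = j + 1) with h | h
        · exact ⟨i, by omega, Or.inl ⟨hxe, by rw [hye, h]⟩⟩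
        · exact ⟨j, by omega, Or.inr ⟨by rw [hxe, h], hye⟩⟩
      · push_neg at hy
        by_cases hil : i = l
        · rw [hxe, hil, hg1 l le_rfl, hg2 y (fun j hj => hy j hj)]
        · exact absurd (hnoext i (by omega) y (hxe ▸ hadj) (fun j hj => hy j hj)) id
    · push_neg at hx
      by_cases hy : ∃ j, j ≤ l ∧ y = v j
      · obtain ⟨j, hj, hye⟩ := hy
        by_cases hjl : j = l
        · rw [hye, hjl, hg1 l le_rfl, hg2 x (fun i hi => hx i hi)]
        · exact absurd (hnoext j (by omega) x (hye ▸ hadj.symm) (fun i hi => hx i hi)) id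
      · push_neg at hy
        rw [hg2 x (fun i hi => hx i hi), hg2 y (fun j hj => hy j hj)]
  -- term computation
  have hterm : ∀ x y, (g x - g y)^2 * pi x * P x y
      = if cond x y then 1/(2*D) else 0 := by
    intro x y
    by_cases hc : cond x y
    · rw [if_pos hc]
      obtain ⟨i, hi, hcase⟩ := hc
      have hadj : G.Adj x y := by
        rcases hcase with ⟨hx, hy⟩ | ⟨hx, hy⟩
        · rw [hx, hy]; exact hpath i hi
        · rw [hx, hy]; exact (hpath i hi).symm
      have hgsq : (g x - g y)^2 = 1 := by
        rcases hcase with ⟨hx, hy⟩ | ⟨hx, hy⟩ <;>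
          rw [hx, hy, hg1 i (le_of_lt hi), hg1 (i+1) hi] <;> push_cast <;> ring
      rw [mul_assoc, hgsq, one_mul]
      exact aux_edge_term hconn hadj
    · rw [if_neg hc]
      by_cases hxy : x = y
      · subst hxy; simp
      by_cases hadj : G.Adj x y
      · rw [claimA x y hadj hc]; simp
      · have : P x y = 0 := by
          rw [hPdef]; unfold lazyWalk; rw [if_neg hxy, if_neg hadj]
        rw [this, mul_zero]
  -- counting the path edges
  have hcount : ∑ x, ∑ y, (if cond x y then (1/(2*D) : ℝ) else 0) = 2 * l * (1/(2*D)) := by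
    rw [← Finset.sum_product']
    rw [← Finset.sum_filter]
    rw [Finset.sum_const, nsmul_eq_mul]
    congr 1
    have hfeq : (Finset.univ ×ˢ Finset.univ).filter (fun p : V × V => cond p.1 p.2)
        = ((Finset.range l).image (fun i => (v i, v (i+1))))
          ∪ ((Finset.range l).image (fun i => (v (i+1), v i))) := by
      ext ⟨a, b⟩
      simp only [Finset.mem_filter, Finset.mem_product, Finset.mem_univ, true_and,
        Finset.mem_union, Finset.mem_image, Finset.mem_range, hconddef]
      constructor
      · rintro ⟨i, hi, ⟨ha, hb⟩ | ⟨ha, hb⟩⟩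
        · exact Or.inl ⟨i, hi, by rw [ha, hb]⟩
        · exact Or.inr ⟨i, hi, by rw [ha, hb]⟩
      · rintro (⟨i, hi, he⟩ | ⟨i, hi, he⟩) <;>
          [exact ⟨i, hi, Or.inl ⟨(Prod.mk.injEq _ _ _ _ ▸ he).1.symm,
            (Prod.mk.injEq _ _ _ _ ▸ he).2.symm⟩⟩;
           exact ⟨i, hi, Or.inr ⟨(Prod.mk.injEq _ _ _ _ ▸ he).1.symm,
            (Prod.mk.injEq _ _ _ _ ▸ he).2.symm⟩⟩]
    rw [hfeq]
    have hinj1 : Set.InjOn (fun i => (v i, v (i+1))) (Finset.range l) := by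
      intro i hi j hj he
      simp only [Finset.coe_range, Set.mem_Iio] at hi hj
      exact hvinj i j (by omega) (by omega) (congrArg Prod.fst he)
    have hinj2 : Set.InjOn (fun i => (v (i+1), v i)) (Finset.range l) := by
      intro i hi j hj he
      simp only [Finset.coe_range, Set.mem_Iio] at hi hj
      exact hvinj i j (by omega) (by omega) (congrArg Prod.snd he)
    have hdisj : Disjoint ((Finset.range l).image (fun i => (v i, v (i+1))))
        ((Finset.range l).image (fun i => (v (i+1), v i))) := by
      rw [Finset.disjoint_left]
      rintro ⟨a, b⟩ h1 h2
      simp only [Finset.mem_image, Finset.mem_range] at h1 h2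
      obtain ⟨i, hi, he1⟩ := h1
      obtain ⟨j, hj, he2⟩ := h2
      have ha1 : a = v i := (congrArg Prod.fst he1).symm
      have hb1 : b = v (i+1) := (congrArg Prod.snd he1).symm
      have ha2 : a = v (j+1) := (congrArg Prod.fst he2).symm
      have hb2 : b = v j := (congrArg Prod.snd he2).symm
      have h1 : i = j + 1 := hvinj i (j+1) (by omega) (by omega) (ha1 ▸ ha2)
      have h2 : i + 1 = j := hvinj (i+1) j (by omega) (by omega) (hb1 ▸ hb2)
      omega
    rw [Finset.card_union_of_disjoint hdisj, Finset.card_image_of_injOn hinj1,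
      Finset.card_image_of_injOn hinj2, Finset.card_range]
    push_cast
    ring
  -- Part 1
  have part1 : dirichletForm P pi g = (l : ℝ) / (4 * G.edgeFinset.card) := by
    unfold dirichletForm
    rw [Finset.sum_congr rfl fun x _ => Finset.sum_congr rfl fun y _ => hterm x y, hcount]
    rw [hD2E] at *
    field_simp
    ring

  -- ===== Part 2 =====
  have hπ1 : ∑ x, pi x = 1 := by
    rw [hpidef]; unfold walkPi; rw [← Finset.sum_div]; exact div_self (ne_of_gt hDpos)
  set m := meanPi pi g with hmdef
  have hL1 : (1:ℝ) ≤ (l:ℝ) := by exact_mod_cast hl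
  have hlpos : (0:ℝ) < (l:ℝ) := by linarith
  have hdeg2 : ∀ k, k + 1 < l → 2 ≤ G.degree (v (k+1)) := by
    intro k hk
    have hmem1 : v k ∈ G.neighborFinset (v (k+1)) := by
      rw [SimpleGraph.mem_neighborFinset]; exact (hpath k (by omega)).symm
    have hmem2 : v (k+2) ∈ G.neighborFinset (v (k+1)) := by
      rw [SimpleGraph.mem_neighborFinset]; exact hpath (k+1) hk
    have hne : v k ≠ v (k+2) := fun h => by
      have := hvinj k (k+2) (by omega) (by omega) h; omega
    rw [← SimpleGraph.card_neighborFinset_eq_degree]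
    calc 2 = ({v k, v (k+2)} : Finset V).card := by
          rw [Finset.card_insert_of_notMem (by simpa using hne), Finset.card_singleton]
    _ ≤ _ := Finset.card_le_card (by
          intro z hz
          rcases Finset.mem_insert.mp hz with h | h
          · subst h; exact hmem1
          · rw [Finset.mem_singleton] at h; subst h; exact hmem2)
  have hvar : varPi pi g = ∑ x, pi x * (g x - m)^2 := by
    unfold varPi; rw [← hmdef]
  have hsubsum : ∑ i ∈ Finset.range (l+1), pi (v i) * ((i:ℝ) - m)^2 ≤ varPi pi g := by
    rw [hvar]
    have hvinj' : Set.InjOn v (Finset.range (l+1)) := by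
      intro i hi j hj he
      simp only [Finset.coe_range, Set.mem_Iio] at hi hj
      exact hvinj i j (by omega) (by omega) he
    have himg : ∑ i ∈ Finset.range (l+1), pi (v i) * ((i:ℝ) - m)^2
        = ∑ x ∈ (Finset.range (l+1)).image v, pi x * (g x - m)^2 := by
      rw [Finset.sum_image (fun i hi j hj he => hvinj i j
        (Nat.lt_succ_iff.mp (Finset.mem_range.mp hi))
        (Nat.lt_succ_iff.mp (Finset.mem_range.mp hj)) he)]
      apply Finset.sum_congr rfl
      intro i hi
      rw [hg1 i (Nat.lt_succ_iff.mp (Finset.mem_range.mp hi))]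
    rw [himg]
    apply Finset.sum_le_sum_of_subset_of_nonneg (Finset.subset_univ _)
    intro x _ _
    have := (hpipos x).le
    positivity
  have hwlb : ∀ i ∈ Finset.range (l+1),
      (if i = 0 ∨ i = l then (1:ℝ) else 2)/D * ((i:ℝ)-m)^2 ≤ pi (v i) * ((i:ℝ)-m)^2 := by
    intro i hi
    apply mul_le_mul_of_nonneg_right _ (sq_nonneg _)
    have hwdeg : (if i = 0 ∨ i = l then (1:ℝ) else 2) ≤ (G.degree (v i) : ℝ) := by
      split_ifs with h
      · exact_mod_cast hdeg (v i)
      · push_neg at h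
        have hi' : i < l + 1 := Finset.mem_range.mp hi
        obtain ⟨k, rfl⟩ : ∃ k, i = k + 1 := ⟨i - 1, by omega⟩
        exact_mod_cast hdeg2 k (by omega)
    rw [hpidef]
    unfold walkPi
    rw [← hDdef]
    exact (div_le_div_iff_of_pos_right hDpos).mpr hwdeg
  have hkey : (l:ℝ)^3/6 ≤ ∑ i ∈ Finset.range (l+1),
      (if i = 0 ∨ i = l then (1:ℝ) else 2) * ((i:ℝ)-m)^2 := by
    have hsplit : ∀ i ∈ Finset.range (l+1),
        (if i = 0 ∨ i = l then (1:ℝ) else 2) * ((i:ℝ)-m)^2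
        = 2*((i:ℝ)-m)^2 - (if i = 0 then ((i:ℝ)-m)^2 else 0)
          - (if i = l then ((i:ℝ)-m)^2 else 0) := by
      intro i _
      by_cases h0 : i = 0 <;> by_cases hL : i = l
      · exfalso; omega
      · rw [if_pos (Or.inl h0), if_pos h0, if_neg hL]; ring
      · rw [if_pos (Or.inr hL), if_neg h0, if_pos hL]; ring
      · rw [if_neg (by tauto), if_neg h0, if_neg hL]; ring
    rw [Finset.sum_congr rfl hsplit, Finset.sum_sub_distrib, Finset.sum_sub_distrib]
    rw [Finset.sum_ite_eq' (Finset.range (l+1)) 0 (fun i => ((i:ℝ)-m)^2)]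
    rw [Finset.sum_ite_eq' (Finset.range (l+1)) l (fun i => ((i:ℝ)-m)^2)]
    rw [if_pos (Finset.mem_range.mpr (by omega)), if_pos (Finset.mem_range.mpr (by omega))]
    rw [← Finset.mul_sum]
    have hexp : ∀ i ∈ Finset.range (l+1), ((i:ℝ)-m)^2 = (i:ℝ)^2 - 2*m*(i:ℝ) + m^2 :=
      fun i _ => by ring
    rw [Finset.sum_congr rfl hexp, Finset.sum_add_distrib, Finset.sum_sub_distrib,
      ← Finset.mul_sum, Finset.sum_const, Finset.card_range, aux_sum_sq l, aux_sum_id l,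
      nsmul_eq_mul]
    push_cast
    nlinarith [sq_nonneg (m - (l:ℝ)/2), hL1, sq_nonneg ((l:ℝ)-m), sq_nonneg m]
  have part2 : (l : ℝ) ^ 3 / (12 * G.edgeFinset.card) ≤ varPi pi g := by
    have step1 : ∑ i ∈ Finset.range (l+1), (if i = 0 ∨ i = l then (1:ℝ) else 2)/D * ((i:ℝ)-m)^2
        ≤ ∑ i ∈ Finset.range (l+1), pi (v i) * ((i:ℝ)-m)^2 := Finset.sum_le_sum hwlb
    have step0 : ∑ i ∈ Finset.range (l+1), (if i = 0 ∨ i = l then (1:ℝ) else 2)/D * ((i:ℝ)-m)^2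
        = (∑ i ∈ Finset.range (l+1), (if i = 0 ∨ i = l then (1:ℝ) else 2) * ((i:ℝ)-m)^2)/D := by
      rw [Finset.sum_div]
      exact Finset.sum_congr rfl fun i _ => by rw [div_mul_eq_mul_div]
    calc (l : ℝ) ^ 3 / (12 * G.edgeFinset.card) = ((l:ℝ)^3/6)/D := by
          rw [hD2E, div_div]
          congr 1
          ring
    _ ≤ (∑ i ∈ Finset.range (l+1), (if i = 0 ∨ i = l then (1:ℝ) else 2) * ((i:ℝ)-m)^2)/D :=
        (div_le_div_iff_of_pos_right hDpos).mpr hkey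
    _ = ∑ i ∈ Finset.range (l+1), (if i = 0 ∨ i = l then (1:ℝ) else 2)/D * ((i:ℝ)-m)^2 :=
        step0.symm
    _ ≤ ∑ i ∈ Finset.range (l+1), pi (v i) * ((i:ℝ)-m)^2 := step1
    _ ≤ varPi pi g := hsubsum
  refine ⟨part1, part2, ?_⟩
  -- ===== Part 3 =====
  intro lam2 hev hne1 hmax
  haveI : Nonempty V := ⟨o⟩
  have hrowsum : ∀ x, ∑ y, P x y = 1 := aux_lazy_rowsum hdeg
  have hlam2lt : lam2 < 1 := by
    have habs := aux_eig_abs_le_one P (fun x y => aux_lazy_nonneg x y) hrowsum lam2 hev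
    rcases lt_or_eq_of_le (abs_le.mp habs).2 with h | h
    · exact h
    · exact absurd h hne1
  set sq : V → ℝ := fun x => Real.sqrt (pi x) with hsqdef
  have hsqpos : ∀ x, 0 < sq x := fun x => Real.sqrt_pos.mpr (hpipos x)
  have hsqsq : ∀ x, sq x * sq x = pi x := fun x => Real.mul_self_sqrt (hpipos x).le
  set A : Matrix V V ℝ := Matrix.of (fun x y => sq x * P x y / sq y) with hAdef
  have hAxy : ∀ x y, A x y = sq x * P x y / sq y := fun x y => rfl
  have hsym : ∀ x y, A x y = A y x := by
    intro x y
    rw [hAxy, hAxy, div_eq_div_iff (hsqpos y).ne' (hsqpos x).ne']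
    calc sq x * P x y * sq x = (sq x * sq x) * P x y := by ring
    _ = pi x * P x y := by rw [hsqsq]
    _ = pi y * P y x := aux_reversible hconn x y
    _ = (sq y * sq y) * P y x := by rw [hsqsq]
    _ = sq y * P y x * sq y := by ring
  set f0 : V → ℝ := fun x => sq x * (g x - m) with hf0def
  have transfer : ∀ (r : ℝ) (u : V → ℝ), A.mulVec u = r • u →
      (Matrix.of P).mulVec (fun x => u x / sq x) = r • (fun x => u x / sq x) := by
    intro r u hu
    funext x
    have hAu : ∑ y, A x y * u y = r * u x := by
      have := congrFun hu x
      simpa [Matrix.mulVec, dotProduct] using this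
    have hLHS : (Matrix.of P).mulVec (fun z => u z / sq z) x = ∑ y, P x y * (u y / sq y) := rfl
    rw [hLHS]
    have hterm2 : ∀ y, P x y * (u y / sq y) = (A x y * u y) / sq x := by
      intro y
      rw [hAxy]
      have hx := (hsqpos x).ne'
      have hy := (hsqpos y).ne'
      field_simp
    rw [Finset.sum_congr rfl fun y _ => hterm2 y, ← Finset.sum_div, hAu]
    simp only [Pi.smul_apply, smul_eq_mul]
    ring
  have hmean0 : ∑ x, pi x * (g x - m) = 0 := by
    have hsplit : ∑ x, pi x * (g x - m) = (∑ x, pi x * g x) - m * ∑ x, pi x := by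
      rw [Finset.mul_sum, ← Finset.sum_sub_distrib]
      exact Finset.sum_congr rfl fun x _ => by ring
    have hmg : ∑ x, pi x * g x = m := rfl
    rw [hsplit, hmg, hπ1, mul_one, sub_self]
  have horth : ∀ u : V → ℝ, A.mulVec u = u → ∑ x, u x * f0 x = 0 := by
    intro u hu
    have hw : (Matrix.of P).mulVec (fun x => u x / sq x) = (fun x => u x / sq x) := by
      have := transfer 1 u (by rw [hu, one_smul])
      rw [this, one_smul]
    have hcst := aux_max_principle hconn _ hw
    have hux : ∀ x, u x = (u o / sq o) * sq x := by
      intro x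
      have h1 : u x / sq x = u o / sq o := hcst x o
      rw [← h1]
      exact (div_mul_cancel₀ _ (hsqpos x).ne').symm
    calc ∑ x, u x * f0 x = ∑ x, (u o / sq o) * (pi x * (g x - m)) := by
          apply Finset.sum_congr rfl
          intro x _
          rw [hux x, hf0def]
          simp only
          rw [← hsqsq x]
          ring
    _ = (u o / sq o) * ∑ x, pi x * (g x - m) := by rw [Finset.mul_sum]
    _ = 0 := by rw [hmean0, mul_zero]
  have hmaxA : ∀ r : ℝ, (∃ u : V → ℝ, u ≠ 0 ∧ A.mulVec u = r • u) → r ≠ 1 → r ≤ lam2 := by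
    rintro r ⟨u, hu0, hur⟩ hr1
    apply hmax r _ hr1
    refine ⟨fun x => u x / sq x, ?_, transfer r u hur⟩
    intro h0
    apply hu0
    funext x
    have hx := congrFun h0 x
    simp only [Pi.zero_apply] at hx ⊢
    exact (div_eq_zero_iff.mp hx).resolve_right (hsqpos x).ne'
  have hspec := aux_spectral A hsym lam2 hmaxA f0 horth
  have hN : ∑ x, f0 x * f0 x = varPi pi g := by
    rw [hvar]
    apply Finset.sum_congr rfl
    intro x _
    show (sq x * (g x - m)) * (sq x * (g x - m)) = pi x * (g x - m)^2
    rw [← hsqsq x]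
    ring
  have hQ : ∑ x, f0 x * (A.mulVec f0) x
      = ∑ x, ∑ y, pi x * P x y * ((g x - m)*(g y - m)) := by
    apply Finset.sum_congr rfl
    intro x _
    have hmv : (A.mulVec f0) x = ∑ y, A x y * f0 y := rfl
    rw [hmv, Finset.mul_sum]
    apply Finset.sum_congr rfl
    intro y _
    have h1 : A x y * f0 y = sq x * P x y * (g y - m) := by
      rw [hAxy]
      show sq x * P x y / sq y * (sq y * (g y - m)) = sq x * P x y * (g y - m)
      rw [div_mul_eq_mul_div, mul_comm (sq y) (g y - m), ← mul_assoc, mul_div_assoc,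
        div_self (hsqpos y).ne', mul_one]
    rw [h1]
    show sq x * (g x - m) * (sq x * P x y * (g y - m)) = pi x * P x y * ((g x - m) * (g y - m))
    rw [← hsqsq x]
    ring
  have hstat : ∀ y, ∑ x, pi x * P x y = pi y := aux_stationary hconn
  have hdir : dirichletForm P pi g
      = varPi pi g - ∑ x, ∑ y, pi x * P x y * ((g x - m)*(g y - m)) := by
    unfold dirichletForm
    have hterm3 : ∀ (x : V), ∀ y ∈ (Finset.univ : Finset V), (g x - g y)^2 * pi x * P x y
        = pi x * P x y * (g x - m)^2 + pi x * P x y * (g y - m)^2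
          - 2 * (pi x * P x y * ((g x - m)*(g y - m))) := fun x y _ => by ring
    rw [Finset.sum_congr rfl fun x _ => Finset.sum_congr rfl (hterm3 x)]
    have hsplit2 : ∀ x : V, ∑ y, (pi x * P x y * (g x - m)^2 + pi x * P x y * (g y - m)^2
          - 2 * (pi x * P x y * ((g x - m)*(g y - m))))
        = (∑ y, pi x * P x y * (g x - m)^2) + (∑ y, pi x * P x y * (g y - m)^2)
          - ∑ y, 2 * (pi x * P x y * ((g x - m)*(g y - m))) := by
      intro x
      rw [Finset.sum_sub_distrib, Finset.sum_add_distrib]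
    rw [Finset.sum_congr rfl fun x _ => hsplit2 x]
    rw [Finset.sum_sub_distrib, Finset.sum_add_distrib]
    have hT1 : ∑ x, ∑ y, pi x * P x y * (g x - m)^2 = varPi pi g := by
      rw [hvar]
      apply Finset.sum_congr rfl
      intro x _
      have : ∑ y, pi x * P x y * (g x - m)^2 = pi x * (g x - m)^2 * ∑ y, P x y := by
        rw [Finset.mul_sum]
        exact Finset.sum_congr rfl fun y _ => by ring
      rw [this, hrowsum, mul_one]
    have hT2 : ∑ x, ∑ y, pi x * P x y * (g y - m)^2 = varPi pi g := by
      rw [Finset.sum_comm, hvar]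
      apply Finset.sum_congr rfl
      intro y _
      have : ∑ x, pi x * P x y * (g y - m)^2 = (∑ x, pi x * P x y) * (g y - m)^2 := by
        rw [Finset.sum_mul]
      rw [this, hstat]
    have hT3 : ∑ x, ∑ y, 2 * (pi x * P x y * ((g x - m)*(g y - m)))
        = 2 * ∑ x, ∑ y, pi x * P x y * ((g x - m)*(g y - m)) := by
      rw [Finset.mul_sum]
      exact Finset.sum_congr rfl fun x _ => by rw [Finset.mul_sum]
    rw [hT1, hT2, hT3]
    ring
  rw [hN, hQ] at hspec
  have hvarpos : 0 < varPi pi g := by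
    have : (0:ℝ) < (l : ℝ) ^ 3 / (12 * G.edgeFinset.card) := by positivity
    linarith [part2]
  have h1 : (1 - lam2) * varPi pi g ≤ (l:ℝ)/(4*(G.edgeFinset.card:ℝ)) := by
    nlinarith [hspec, hdir, part1]
  have h2 : (1 - lam2) * ((l:ℝ)^3/(12*(G.edgeFinset.card:ℝ))) ≤ (1-lam2)*varPi pi g :=
    mul_le_mul_of_nonneg_left part2 (by linarith)
  have h3 : (1 - lam2) * ((l:ℝ)^3/(12*(G.edgeFinset.card:ℝ))) ≤ (l:ℝ)/(4*(G.edgeFinset.card:ℝ)) :=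
    le_trans h2 h1
  have h4 : ((1 - lam2) * (l:ℝ)^3) / (12*(G.edgeFinset.card:ℝ)) ≤ (l:ℝ)/(4*(G.edgeFinset.card:ℝ)) := by
    rw [← mul_div_assoc] at h3
    exact h3
  have h5 : (1 - lam2) * (l:ℝ)^3 * (4*(G.edgeFinset.card:ℝ)) ≤ (l:ℝ) * (12*(G.edgeFinset.card:ℝ)) :=
    (div_le_div_iff₀ (by positivity) (by positivity)).mp h4
  have hgap : (1-lam2) * (l:ℝ)^2 ≤ 3 := by
    nlinarith [h5, hEpos, hlpos, mul_pos hEpos hlpos]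
  rw [div_le_div_iff₀ (by norm_num : (0:ℝ) < 3) (by linarith : (0:ℝ) < 1 - lam2)]
  nlinarith [hgap]

end Main

end NoCutoff
end
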